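/- arXiv:1807.07167 — 4 statements merged into one kernel-verified Lean document; each statement's English description precedes it below -/
import Mathlib

section
/- Let G be a finite connected electrical network, let a be a vertex and Z a set of vertices not containing a, and let i be the unit current flowing from a to Z. Then for every edge {x,y} of G, the absolute value of the current satisfies |i(x,y)| ≤ 1. -/
/-!
For `v y < v x` let `S = {u | v x ≤ v u}` and `T = {u | v u ≤ v y}`. Every current leaving `S`
is nonnegative and every current leaving `T` is nonpositive, so `i x y` is at most the net current
out of `S` and also at most minus the net current out of `T`. Since `v = 0` on `Z`, one of the two
sets avoids `Z`, and by Kirchhoff's node law the net current out of a set avoiding `Z` is `1` or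
`0` according as it contains `a`. Hence `i x y ≤ 1` or `i x y ≤ 0`.
-/

open Finset

section Network

variable {V : Type*}

section AntisymmFlow

variable {f : V → V → ℝ}

theorem sum_sum_eq_zero_of_antisymm (hf : ∀ x y, f x y = -f y x) (S : Finset V) :
    ∑ u ∈ S, ∑ w ∈ S, f u w = 0 := by
  have h : ∑ u ∈ S, ∑ w ∈ S, f u w = -∑ u ∈ S, ∑ w ∈ S, f u w :=
    calc ∑ u ∈ S, ∑ w ∈ S, f u w = ∑ u ∈ S, ∑ w ∈ S, -f w u :=
          sum_congr rfl fun u _ => sum_congr rfl fun w _ => hf u w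
      _ = ∑ w ∈ S, ∑ u ∈ S, -f w u := sum_comm
      _ = -∑ u ∈ S, ∑ w ∈ S, f u w := by simp only [sum_neg_distrib]
  linarith

theorem sum_sum_compl_eq_of_antisymm [Fintype V] [DecidableEq V] (hf : ∀ x y, f x y = -f y x)
    (S : Finset V) :
    ∑ u ∈ S, ∑ w ∈ Sᶜ, f u w = ∑ u ∈ S, ∑ w, f u w := by
  simp_rw [← Finset.sum_compl_add_sum S]
  rw [Finset.sum_add_distrib, sum_sum_eq_zero_of_antisymm hf, add_zero]

theorem le_sum_sum_of_antisymm [Fintype V] [DecidableEq V] (hf : ∀ x y, f x y = -f y x)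
    {S : Finset V} (hout : ∀ u ∈ S, ∀ w ∉ S, 0 ≤ f u w) {x y : V} (hx : x ∈ S) (hy : y ∉ S) :
    f x y ≤ ∑ u ∈ S, ∑ w, f u w := by
  have hout' : ∀ u ∈ S, ∀ w ∈ Sᶜ, 0 ≤ f u w := fun u hu w hw => hout u hu w (mem_compl.1 hw)
  rw [← sum_sum_compl_eq_of_antisymm hf]
  calc f x y ≤ ∑ w ∈ Sᶜ, f x w := single_le_sum (hout' x hx) (mem_compl.2 hy)
    _ ≤ ∑ u ∈ S, ∑ w ∈ Sᶜ, f u w :=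
      single_le_sum (fun u hu => sum_nonneg (hout' u hu)) hx

end AntisymmFlow

theorem current_antisymm {c : V → V → ℝ} (hsym : ∀ x y, c x y = c y x) {v : V → ℝ}
    {i : V → V → ℝ} (hOhm : ∀ x y, i x y = c x y * (v x - v y)) (x y : V) :
    i x y = -i y x := by
  rw [hOhm, hOhm, hsym x y]; ring

theorem current_nonneg_of_le {c : V → V → ℝ} (hc : ∀ x y, 0 ≤ c x y) {v : V → ℝ}
    {i : V → V → ℝ} (hOhm : ∀ x y, i x y = c x y * (v x - v y)) {x y : V} (hxy : v y ≤ v x) :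
    0 ≤ i x y := by
  rw [hOhm]; exact mul_nonneg (hc x y) (sub_nonneg.2 hxy)

theorem sum_current_eq_zero [Fintype V] {c : V → V → ℝ} {v : V → ℝ} {i : V → V → ℝ}
    (hOhm : ∀ x y, i x y = c x y * (v x - v y)) {x : V}
    (hharm : (∑ y, c x y) * v x = ∑ y, c x y * v y) :
    ∑ y, i x y = 0 := by
  simp only [hOhm, mul_sub]
  rw [sum_sub_distrib, ← sum_mul, hharm, sub_self]

theorem sum_sum_current_eq_ite [Fintype V] [DecidableEq V] {c : V → V → ℝ} {a : V} {Z : Set V}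
    {v : V → ℝ} (hharm : ∀ x, x ≠ a → x ∉ Z → (∑ y, c x y) * v x = ∑ y, c x y * v y)
    {i : V → V → ℝ} (hOhm : ∀ x y, i x y = c x y * (v x - v y)) (hstrength : ∑ y, i a y = 1)
    (S : Finset V) (hSZ : ∀ u ∈ S, u ∉ Z) :
    ∑ u ∈ S, ∑ w, i u w = if a ∈ S then 1 else 0 := by
  rw [← sum_ite_eq' S a fun _ => (1 : ℝ)]
  refine sum_congr rfl fun u hu => ?_
  split_ifs with hua
  · rw [hua, hstrength]
  · exact sum_current_eq_zero hOhm (hharm u hua (hSZ u hu))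

/-- No current enters the superlevel set `{u | v x ≤ v u}`. -/
theorem current_le_sum_sum_superlevel [Fintype V] [DecidableEq V] {c : V → V → ℝ}
    (hsym : ∀ x y, c x y = c y x) (hc : ∀ x y, 0 ≤ c x y) {v : V → ℝ} {i : V → V → ℝ}
    (hOhm : ∀ x y, i x y = c x y * (v x - v y)) {x y : V} (hxy : v y < v x) :
    i x y ≤ ∑ u ∈ univ.filter (fun u => v x ≤ v u), ∑ w, i u w := by
  refine le_sum_sum_of_antisymm (current_antisymm hsym hOhm) (fun u hu w hw => ?_)
    (by simp) (by simpa using hxy)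
  simp only [mem_filter, mem_univ, true_and, not_le] at hu hw
  exact current_nonneg_of_le hc hOhm (by linarith)

theorem current_le_one [Fintype V] [DecidableEq V] {c : V → V → ℝ}
    (hsym : ∀ x y, c x y = c y x) (hc : ∀ x y, 0 ≤ c x y) {a : V} {Z : Set V} {v : V → ℝ}
    (hv0 : ∀ z ∈ Z, v z = 0)
    (hharm : ∀ x, x ≠ a → x ∉ Z → (∑ y, c x y) * v x = ∑ y, c x y * v y)
    {i : V → V → ℝ} (hOhm : ∀ x y, i x y = c x y * (v x - v y)) (hstrength : ∑ y, i a y = 1)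
    (x y : V) :
    i x y ≤ 1 := by
  have hdiv := sum_sum_current_eq_ite hharm hOhm hstrength
  rcases le_or_gt (v x) (v y) with hxy | hxy
  · linarith [current_antisymm hsym hOhm x y, current_nonneg_of_le hc hOhm hxy]
  by_cases hZ : ∃ z ∈ Z, v x ≤ v z
  · obtain ⟨z, hzZ, hxz⟩ := hZ
    -- `-i` is the current of the voltage `-v`, whose superlevel set at `y` is a sublevel set of `v`
    have hle := current_le_sum_sum_superlevel hsym hc (v := -v) (i := fun u w => -i u w)
      (fun u w => by simp only [hOhm, Pi.neg_apply]; ring) (x := y) (y := x) (by simpa using hxy)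
    simp only [Pi.neg_apply, neg_le_neg_iff, sum_neg_distrib] at hle
    rw [hdiv _ fun u hu huZ => by
      have := (mem_filter.1 hu).2; linarith [hv0 u huZ, hv0 z hzZ],
      current_antisymm hsym hOhm y x] at hle
    split_ifs at hle <;> linarith
  · have hle := current_le_sum_sum_superlevel hsym hc hOhm hxy
    rw [hdiv _ fun u hu huZ => hZ ⟨u, huZ, (mem_filter.1 hu).2⟩] at hle
    split_ifs at hle <;> linarith

end Network

theorem stmt0_general {V : Type*} [Fintype V] [DecidableEq V]
    (G : SimpleGraph V)
    (c : V → V → ℝ)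
    (hsym : ∀ x y, c x y = c y x)
    (hpos : ∀ x y, G.Adj x y → 0 < c x y)
    (hzero : ∀ x y, ¬ G.Adj x y → c x y = 0)
    (a : V) (Z : Set V)
    (v : V → ℝ)
    (hv0 : ∀ z ∈ Z, v z = 0)
    (hharm : ∀ x, x ≠ a → x ∉ Z → (∑ y, c x y) * v x = ∑ y, c x y * v y)
    (i : V → V → ℝ)
    (hOhm : ∀ x y, i x y = c x y * (v x - v y))
    (hstrength : ∑ y, i a y = 1) :
    ∀ x y, G.Adj x y → |i x y| ≤ 1 := by
  have hc : ∀ x y, 0 ≤ c x y := fun x y => by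
    by_cases h : G.Adj x y
    · exact (hpos x y h).le
    · exact (hzero x y h).ge
  have hle : ∀ x y, i x y ≤ 1 := current_le_one hsym hc hv0 hharm hOhm hstrength
  intro x y _
  rw [abs_le]
  constructor <;> linarith [hle x y, hle y x, current_antisymm hsym hOhm x y]

/-- **Unit current edge bound.** In a finite connected electrical network, if `i` is the unit
current flowing from `a` to `Z` (defined via Ohm's law from a voltage `v` that is harmonic off
`{a} ∪ Z` and vanishes on `Z`, with strength `1`), then `|i x y| ≤ 1` on every edge. -/
theorem stmt0 {V : Type*} [Fintype V] [DecidableEq V]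
    (G : SimpleGraph V) (hconn : G.Connected)
    (c : V → V → ℝ)
    (hsym : ∀ x y, c x y = c y x)
    (hpos : ∀ x y, G.Adj x y → 0 < c x y)
    (hzero : ∀ x y, ¬ G.Adj x y → c x y = 0)
    (a : V) (Z : Set V) (haZ : a ∉ Z) (hZ : Z.Nonempty)
    (v : V → ℝ)
    (hv0 : ∀ z ∈ Z, v z = 0)
    (hharm : ∀ x, x ≠ a → x ∉ Z → (∑ y, c x y) * v x = ∑ y, c x y * v y)
    (i : V → V → ℝ)
    (hOhm : ∀ x y, i x y = c x y * (v x - v y))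
    (hstrength : ∑ y, i a y = 1) :
    ∀ x y, G.Adj x y → |i x y| ≤ 1 :=
  stmt0_general G c hsym hpos hzero a Z v hv0 hharm i hOhm hstrength
end

section
/- Let G be a finite connected graph with two conductance assignments c and c' on its edges satisfying c(e) ≤ c'(e) for all edges e. Then for any vertex a and any set of vertices Z not containing a, the effective conductance satisfies C_c(a ↔ Z) ≤ C_{c'}(a ↔ Z). -/
open Finset

/-! Rayleigh monotonicity via the Dirichlet principle: every admissible potential has no larger
energy for `c` than for `c'`, because the energy is a sum of the conductances weighted by the
nonnegative squares `(f x - f y)^2`. -/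

theorem csInf_le_csInf_of_forall_exists_le {α : Type*} [ConditionallyCompleteLattice α]
    {s t : Set α} (hs : BddBelow s) (ht : t.Nonempty) (h : ∀ y ∈ t, ∃ x ∈ s, x ≤ y) :
    sInf s ≤ sInf t :=
  le_csInf ht fun y hy =>
    let ⟨_, hx, hxy⟩ := h y hy
    (csInf_le hs hx).trans hxy

section DirichletEnergy

variable {V : Type*} [Fintype V]

noncomputable def dirichletEnergy (c : V → V → ℝ) (f : V → ℝ) : ℝ :=
  (1/2) * ∑ x, ∑ y, c x y * (f x - f y)^2

theorem dirichletEnergy_nonneg {c : V → V → ℝ} (hc : ∀ x y, 0 ≤ c x y) (f : V → ℝ) :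
    0 ≤ dirichletEnergy c f := by
  unfold dirichletEnergy
  have := sum_nonneg fun x (_ : x ∈ univ) => sum_nonneg fun y (_ : y ∈ univ) =>
    mul_nonneg (hc x y) (sq_nonneg (f x - f y))
  positivity

theorem dirichletEnergy_mono {c c' : V → V → ℝ} (hle : ∀ x y, c x y ≤ c' x y) (f : V → ℝ) :
    dirichletEnergy c f ≤ dirichletEnergy c' f := by
  unfold dirichletEnergy
  gcongr with x _ y _
  exact hle x y

end DirichletEnergy

theorem SimpleGraph.conductance_nonneg {V : Type*} (G : SimpleGraph V) {c : V → V → ℝ}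
    (hpos : ∀ x y, G.Adj x y → 0 < c x y) (hzero : ∀ x y, ¬ G.Adj x y → c x y = 0)
    (x y : V) : 0 ≤ c x y := by
  by_cases h : G.Adj x y
  · exact (hpos x y h).le
  · exact (hzero x y h).ge

theorem stmt1_general {V : Type*} [Fintype V]
    (G : SimpleGraph V)
    (c c' : V → V → ℝ)
    (hpos : ∀ x y, G.Adj x y → 0 < c x y)
    (hzero : ∀ x y, ¬ G.Adj x y → c x y = 0)
    (hle : ∀ x y, c x y ≤ c' x y)
    (a : V) (Z : Set V) (haZ : a ∉ Z) :
    sInf {E : ℝ | ∃ f : V → ℝ, f a = 1 ∧ (∀ z ∈ Z, f z = 0) ∧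
        E = (1/2) * ∑ x, ∑ y, c x y * (f x - f y)^2}
      ≤ sInf {E : ℝ | ∃ f : V → ℝ, f a = 1 ∧ (∀ z ∈ Z, f z = 0) ∧
        E = (1/2) * ∑ x, ∑ y, c' x y * (f x - f y)^2} := by
  classical
  have hbdd : BddBelow {E : ℝ | ∃ f : V → ℝ, f a = 1 ∧ (∀ z ∈ Z, f z = 0) ∧
      E = dirichletEnergy c f} := by
    refine ⟨0, ?_⟩
    rintro E ⟨f, -, -, rfl⟩
    exact dirichletEnergy_nonneg (G.conductance_nonneg hpos hzero) f
  have hadmissible : (Pi.single a 1 : V → ℝ) a = 1 ∧ ∀ z ∈ Z, (Pi.single a 1 : V → ℝ) z = 0 :=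
    ⟨Pi.single_eq_same a 1, fun z hz => Pi.single_eq_of_ne (ne_of_mem_of_not_mem hz haZ) 1⟩
  refine csInf_le_csInf_of_forall_exists_le hbdd
    ⟨_, _, hadmissible.1, hadmissible.2, rfl⟩ ?_
  rintro _ ⟨f, hfa, hfZ, rfl⟩
  exact ⟨_, ⟨f, hfa, hfZ, rfl⟩, dirichletEnergy_mono hle f⟩

/-- **Rayleigh's monotonicity principle.** For a finite connected graph with two conductance
assignments `c ≤ c'`, the effective conductance from `a` to `Z` (expressed via the Dirichlet
variational principle as the infimum of the energies of potentials equal to `1` at `a` and `0`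
on `Z`) is monotone: `C_c(a ↔ Z) ≤ C_{c'}(a ↔ Z)`. -/
theorem stmt1 {V : Type*} [Fintype V]
    (G : SimpleGraph V) (hconn : G.Connected)
    (c c' : V → V → ℝ)
    (hsym : ∀ x y, c x y = c y x) (hsym' : ∀ x y, c' x y = c' y x)
    (hpos : ∀ x y, G.Adj x y → 0 < c x y) (hpos' : ∀ x y, G.Adj x y → 0 < c' x y)
    (hzero : ∀ x y, ¬ G.Adj x y → c x y = 0) (hzero' : ∀ x y, ¬ G.Adj x y → c' x y = 0)
    (hle : ∀ x y, c x y ≤ c' x y)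
    (a : V) (Z : Set V) (haZ : a ∉ Z) (hZ : Z.Nonempty) :
    sInf {E : ℝ | ∃ f : V → ℝ, f a = 1 ∧ (∀ z ∈ Z, f z = 0) ∧
        E = (1/2) * ∑ x, ∑ y, c x y * (f x - f y)^2}
      ≤ sInf {E : ℝ | ∃ f : V → ℝ, f a = 1 ∧ (∀ z ∈ Z, f z = 0) ∧
        E = (1/2) * ∑ x, ∑ y, c' x y * (f x - f y)^2} :=
  stmt1_general G c c' hpos hzero hle a Z haZ
end

section
/- Consider the simple random walk on G = ℤ × Γ where Γ is a finite connected graph. Let a, b ∈ G be two vertices on the same level, i.e., with equal ℤ-coordinates. Then P_a(H_b ≤ 4⁶|Γ|⁶) ≥ 1/2, where H_b is the hitting time of b. -/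
/-!
Compare the walk with the walk on the slab `[z₀ - L, z₀ + L] × Γ` around the common level `z₀`
whose vertical steps out of the slab are turned into loops; the two agree until a wall is reached.
The slab walk is reversible with respect to `deg + 2`, with total mass at most
`(2L + 1) |Γ| (|Γ| + 1)`, so by a Kac-type estimate its expected time to reach a `Γ`-neighbour on
the same level is at most that mass. Chaining along a path of `Γ` and Markov's inequality, it misses
`b` during `T = 4⁶ |Γ|⁶` steps with probability at most `1/4`. The squared level grows by at most
one per step in expectation, so a wall at distance `L = 256 |Γ|³` is reached within `T` steps with
probability at most `T / L² = 1/16`. Hence `P_a(H_b ≤ T) ≥ 1 - 1/4 - 1/16 ≥ 1/2`.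
-/

open MeasureTheory Finset
open scoped ENNReal Classical

/-- The cylinder graph `ℤ × Γ`: two vertices are adjacent if they are on the same level and
adjacent in `Γ`, or carry the same `Γ`-coordinate and sit on consecutive levels. -/
def cylGraph {W : Type*} (Γ : SimpleGraph W) : SimpleGraph (ℤ × W) where
  Adj u v := (u.1 = v.1 ∧ Γ.Adj u.2 v.2) ∨ (u.2 = v.2 ∧ (v.1 = u.1 + 1 ∨ u.1 = v.1 + 1))
  symm := by
    constructor
    intro u v h
    rcases h with ⟨h1, h2⟩ | ⟨h1, h2⟩
    · exact Or.inl ⟨h1.symm, h2.symm⟩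
    · exact Or.inr ⟨h1.symm, h2.symm⟩
  loopless := by
    constructor
    intro u h
    rcases h with ⟨_, h2⟩ | ⟨_, h2⟩
    · exact Γ.loopless.irrefl _ h2
    · rcases h2 with h | h <;> omega

section FiniteChain

variable {V : Type*}

structure IsStochasticOn (s : Finset V) (P : V → V → ℝ) : Prop where
  nonneg : ∀ x y, 0 ≤ P x y
  sum_eq_one : ∀ x ∈ s, ∑ y ∈ s, P x y = 1

/-- The probability that the chain with transition weights `P` on `s`, started at `x`, enters `B`
within `t` steps without leaving `D` before. -/
noncomputable def hitProb (s : Finset V) (P : V → V → ℝ) (B D : Set V) : ℕ → V → ℝ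
  | 0, x => if x ∈ B then 1 else 0
  | t + 1, x => if x ∈ B then 1 else if x ∈ D then ∑ y ∈ s, P x y * hitProb s P B D t y else 0

/-- `E_x[min(H_c, T)]`, written as the sum of the tail probabilities `P_x(H_c > t)`, `t < T`. -/
noncomputable def truncHitTime (s : Finset V) (P : V → V → ℝ) (c : V) (T : ℕ) (x : V) : ℝ :=
  ∑ t ∈ range T, (1 - hitProb s P {c} Set.univ t x)

variable {s : Finset V} {P : V → V → ℝ} {B D : Set V} {x : V}

@[simp]
lemma hitProb_of_mem (hx : x ∈ B) (t : ℕ) : hitProb s P B D t x = 1 := by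
  cases t <;> simp [hitProb, hx]

lemma hitProb_zero_of_notMem (hx : x ∉ B) : hitProb s P B D 0 x = 0 := by
  simp [hitProb, hx]

lemma hitProb_succ_of_notMem (hxB : x ∉ B) (hxD : x ∈ D) (t : ℕ) :
    hitProb s P B D (t + 1) x = ∑ y ∈ s, P x y * hitProb s P B D t y := by
  simp [hitProb, hxB, hxD]

lemma hitProb_succ_of_notMem_of_notMem (hxB : x ∉ B) (hxD : x ∉ D) (t : ℕ) :
    hitProb s P B D (t + 1) x = 0 := by
  simp [hitProb, hxB, hxD]

lemma hitProb_nonneg (hP : ∀ x y, 0 ≤ P x y) (t : ℕ) (x : V) : 0 ≤ hitProb s P B D t x := by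
  induction t generalizing x with
  | zero => unfold hitProb; split_ifs <;> norm_num
  | succ t ih =>
    unfold hitProb
    split_ifs
    exacts [zero_le_one, sum_nonneg fun y _ => mul_nonneg (hP x y) (ih y), le_rfl]

lemma hitProb_le_succ (hP : ∀ x y, 0 ≤ P x y) (t : ℕ) (x : V) :
    hitProb s P B D t x ≤ hitProb s P B D (t + 1) x := by
  induction t generalizing x with
  | zero =>
    by_cases hxB : x ∈ B
    · simp [hxB]
    · rw [hitProb_zero_of_notMem hxB]; exact hitProb_nonneg hP 1 x
  | succ t ih =>
    by_cases hxB : x ∈ B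
    · simp [hxB]
    by_cases hxD : x ∈ D
    · rw [hitProb_succ_of_notMem hxB hxD, hitProb_succ_of_notMem hxB hxD]
      exact sum_le_sum fun y _ => mul_le_mul_of_nonneg_left (ih y) (hP x y)
    · rw [hitProb_succ_of_notMem_of_notMem hxB hxD, hitProb_succ_of_notMem_of_notMem hxB hxD]

lemma hitProb_monotone (hP : ∀ x y, 0 ≤ P x y) (x : V) :
    Monotone fun t => hitProb s P B D t x :=
  monotone_nat_of_le_succ fun t => hitProb_le_succ hP t x

lemma truncHitTime_self (T : ℕ) (c : V) : truncHitTime s P c T c = 0 :=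
  sum_eq_zero fun t _ => by simp

lemma mul_one_sub_hitProb_le_truncHitTime (hP : ∀ x y, 0 ≤ P x y) (c : V) (T : ℕ) (x : V) :
    T * (1 - hitProb s P {c} Set.univ T x) ≤ truncHitTime s P c T x := by
  calc (T : ℝ) * (1 - hitProb s P {c} Set.univ T x)
      = ∑ t ∈ range T, (1 - hitProb s P {c} Set.univ T x) := by
        simp only [sum_const, card_range, nsmul_eq_mul]
    _ ≤ truncHitTime s P c T x :=
      sum_le_sum fun t ht => sub_le_sub_left
        (hitProb_monotone hP x (mem_range.1 ht).le) 1

namespace IsStochasticOn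

lemma sum_mul_one_sub (hP : IsStochasticOn s P) (hx : x ∈ s) (f : V → ℝ) :
    ∑ y ∈ s, P x y * (1 - f y) = 1 - ∑ y ∈ s, P x y * f y := by
  simp only [mul_sub, mul_one, sum_sub_distrib, hP.sum_eq_one x hx]

lemma hitProb_le_one (hP : IsStochasticOn s P) (t : ℕ) (hx : x ∈ s) :
    hitProb s P B D t x ≤ 1 := by
  induction t generalizing x with
  | zero => unfold hitProb; split_ifs <;> norm_num
  | succ t ih =>
    unfold hitProb
    split_ifs
    · exact le_rfl
    · calc ∑ y ∈ s, P x y * hitProb s P B D t y ≤ ∑ y ∈ s, P x y * 1 :=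
            sum_le_sum fun y hy => mul_le_mul_of_nonneg_left (ih hy) (hP.nonneg x y)
        _ = 1 := by simp only [mul_one]; exact hP.sum_eq_one x hx
    · exact zero_le_one

lemma one_sub_hitProb_nonneg (hP : IsStochasticOn s P) (t : ℕ) (hx : x ∈ s) :
    0 ≤ 1 - hitProb s P B D t x :=
  sub_nonneg.2 (hP.hitProb_le_one t hx)

lemma one_sub_hitProb_succ (hP : IsStochasticOn s P) (hx : x ∈ s) (hxB : x ∉ B) (t : ℕ) :
    1 - hitProb s P B Set.univ (t + 1) x
      = ∑ y ∈ s, P x y * (1 - hitProb s P B Set.univ t y) := by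
  rw [hitProb_succ_of_notMem hxB (Set.mem_univ x), hP.sum_mul_one_sub hx]

lemma hitProb_sub_hitProb_compl_le (hP : IsStochasticOn s P) (t : ℕ) (hx : x ∈ s) :
    hitProb s P B Set.univ t x - hitProb s P Dᶜ Set.univ t x ≤ hitProb s P B D t x := by
  induction t generalizing x with
  | zero =>
    by_cases hxB : x ∈ B
    · simp only [hitProb_of_mem hxB, sub_le_self_iff]; exact hitProb_nonneg hP.nonneg 0 x
    · simp only [hitProb_zero_of_notMem hxB, zero_sub, neg_nonpos]
      exact hitProb_nonneg hP.nonneg 0 x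
  | succ t ih =>
    by_cases hxB : x ∈ B
    · simp only [hitProb_of_mem hxB, sub_le_self_iff]; exact hitProb_nonneg hP.nonneg _ x
    by_cases hxD : x ∈ D
    · rw [hitProb_succ_of_notMem hxB (Set.mem_univ x),
        hitProb_succ_of_notMem (Set.notMem_compl_iff.2 hxD) (Set.mem_univ x),
        hitProb_succ_of_notMem hxB hxD, ← sum_sub_distrib]
      exact sum_le_sum fun y hy => by
        rw [← mul_sub]; exact mul_le_mul_of_nonneg_left (ih hy) (hP.nonneg x y)
    · rw [hitProb_of_mem (Set.mem_compl hxD), hitProb_succ_of_notMem_of_notMem hxB hxD,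
        sub_nonpos]
      exact hP.hitProb_le_one _ hx

lemma mul_hitProb_le_of_drift (hP : IsStochasticOn s P) {φ : V → ℝ} {K : ℝ}
    (hφ : ∀ x ∈ s, 0 ≤ φ x) (hφB : ∀ x ∈ s, x ∈ B → K ≤ φ x)
    (hdrift : ∀ x ∈ s, x ∉ B → ∑ y ∈ s, P x y * φ y ≤ φ x + 1) (t : ℕ) (hx : x ∈ s) :
    K * hitProb s P B Set.univ t x ≤ φ x + t := by
  induction t generalizing x with
  | zero =>
    by_cases hxB : x ∈ B
    · simpa [hitProb_of_mem hxB] using hφB x hx hxB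
    · simpa [hitProb_zero_of_notMem hxB] using hφ x hx
  | succ t ih =>
    by_cases hxB : x ∈ B
    · simp only [hitProb_of_mem hxB, mul_one]
      linarith [hφB x hx hxB, (t + 1).cast_nonneg (α := ℝ)]
    rw [hitProb_succ_of_notMem hxB (Set.mem_univ x), mul_sum]
    calc ∑ y ∈ s, K * (P x y * hitProb s P B Set.univ t y)
        = ∑ y ∈ s, P x y * (K * hitProb s P B Set.univ t y) := by
          exact sum_congr rfl fun y _ => by ring
      _ ≤ ∑ y ∈ s, P x y * (φ y + t) :=
          sum_le_sum fun y hy => mul_le_mul_of_nonneg_left (ih hy) (hP.nonneg x y)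
      _ = ∑ y ∈ s, P x y * φ y + t := by
          simp only [mul_add, sum_add_distrib, ← sum_mul, hP.sum_eq_one x hx, one_mul]
      _ ≤ φ x + ↑(t + 1) := by push_cast; linarith [hdrift x hx hxB]

lemma truncHitTime_nonneg (hP : IsStochasticOn s P) (c : V) (T : ℕ) (hx : x ∈ s) :
    0 ≤ truncHitTime s P c T x :=
  sum_nonneg fun t _ => hP.one_sub_hitProb_nonneg t hx

lemma truncHitTime_le_succ (hP : IsStochasticOn s P) (c : V) (T : ℕ) (hx : x ∈ s) :
    truncHitTime s P c T x ≤ truncHitTime s P c (T + 1) x := by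
  rw [truncHitTime, truncHitTime, sum_range_succ]
  linarith [hP.one_sub_hitProb_nonneg (B := {c}) (D := Set.univ) T hx]

lemma truncHitTime_succ (hP : IsStochasticOn s P) {c : V} (hx : x ∈ s) (hxc : x ≠ c) (T : ℕ) :
    truncHitTime s P c (T + 1) x = 1 + ∑ y ∈ s, P x y * truncHitTime s P c T y := by
  have hxc' : x ∉ ({c} : Set V) := hxc
  simp only [truncHitTime, sum_range_succ', hP.one_sub_hitProb_succ hx hxc',
    hitProb_zero_of_notMem hxc', sub_zero, mul_sum]
  rw [sum_comm, add_comm]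

lemma truncHitTime_le_add (hP : IsStochasticOn s P) {y z : V} (hx : x ∈ s) (hy : y ∈ s)
    (T : ℕ) :
    truncHitTime s P z T x ≤ truncHitTime s P y T x + truncHitTime s P z T y := by
  induction T generalizing x with
  | zero => simp [truncHitTime]
  | succ T ih =>
    by_cases hxz : x = z
    · rw [hxz, truncHitTime_self]
      exact add_nonneg (hP.truncHitTime_nonneg y _ (hxz ▸ hx)) (hP.truncHitTime_nonneg z _ hy)
    by_cases hxy : x = y
    · rw [hxy, truncHitTime_self, zero_add]
    rw [hP.truncHitTime_succ hx hxz, hP.truncHitTime_succ hx hxy]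
    calc 1 + ∑ w ∈ s, P x w * truncHitTime s P z T w
        ≤ 1 + ∑ w ∈ s, P x w * (truncHitTime s P y T w + truncHitTime s P z T y) := by
          gcongr with w hw
          · exact hP.nonneg x w
          · exact ih hw
      _ = 1 + ∑ w ∈ s, P x w * truncHitTime s P y T w + truncHitTime s P z T y := by
          simp only [mul_add, sum_add_distrib, ← sum_mul, hP.sum_eq_one x hx, one_mul, add_assoc]
      _ ≤ 1 + ∑ w ∈ s, P x w * truncHitTime s P y T w + truncHitTime s P z (T + 1) y := by
          linarith [hP.truncHitTime_le_succ z T hy]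

lemma sum_mul_eq_of_reversible (hP : IsStochasticOn s P) {π : V → ℝ}
    (hrev : ∀ x ∈ s, ∀ y ∈ s, π x * P x y = π y * P y x) {y : V} (hy : y ∈ s) :
    ∑ x ∈ s, π x * P x y = π y := by
  rw [sum_congr rfl fun x hx => hrev x hx y hy, ← mul_sum, hP.sum_eq_one y hy, mul_one]

lemma sum_mul_one_sub_hitProb_succ (hP : IsStochasticOn s P) {π : V → ℝ}
    (hπ : ∀ y ∈ s, ∑ x ∈ s, π x * P x y = π y) {c : V} (hc : c ∈ s) (t : ℕ) :
    ∑ x ∈ s, π x * (1 - hitProb s P {c} Set.univ (t + 1) x)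
      = ∑ x ∈ s, π x * (1 - hitProb s P {c} Set.univ t x)
        - π c * ∑ y ∈ s, P c y * (1 - hitProb s P {c} Set.univ t y) := by
  set q : V → ℝ := fun y => 1 - hitProb s P {c} Set.univ t y
  have hstep : ∀ x ∈ s, π x * (1 - hitProb s P {c} Set.univ (t + 1) x)
      = π x * ∑ y ∈ s, P x y * q y - if x = c then π c * ∑ y ∈ s, P c y * q y else 0 := by
    intro x hx
    by_cases hxc : x = c
    · subst hxc; simp
    · rw [hP.one_sub_hitProb_succ hx hxc, if_neg hxc, sub_zero]
  rw [sum_congr rfl hstep, sum_sub_distrib, sum_ite_eq' s c, if_pos hc]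
  congr 1
  simp only [mul_sum, ← mul_assoc]
  rw [sum_comm]
  exact sum_congr rfl fun y hy => by rw [← sum_mul, hπ y hy]

/-- Kac-type bound: the `π`-mass of the paths that have not yet hit `c` drops at each step by the
mass `π c * P c y * P_y(H_c > t)` that leaves `c`, and it can drop by at most `∑ π` in total. -/
theorem mul_truncHitTime_le (hP : IsStochasticOn s P) {π : V → ℝ} (hπ0 : ∀ x ∈ s, 0 ≤ π x)
    (hπ : ∀ y ∈ s, ∑ x ∈ s, π x * P x y = π y) {c u : V} (hc : c ∈ s) (hu : u ∈ s) (T : ℕ) :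
    π c * P c u * truncHitTime s P c T u ≤ ∑ x ∈ s, π x := by
  set surv : ℕ → V → ℝ := fun t y => 1 - hitProb s P {c} Set.univ t y
  set mass : ℕ → ℝ := fun t => ∑ x ∈ s, π x * surv t x
  set escape : ℕ → ℝ := fun t => ∑ y ∈ s, P c y * surv t y
  have hmass : mass T = mass 0 - π c * ∑ t ∈ range T, escape t := by
    induction T with
    | zero => simp
    | succ T ih =>
      rw [sum_range_succ, mul_add, ← sub_sub, ← ih]
      exact hP.sum_mul_one_sub_hitProb_succ hπ hc T
  have hmass_nonneg : 0 ≤ mass T :=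
    sum_nonneg fun x hx => mul_nonneg (hπ0 x hx) (hP.one_sub_hitProb_nonneg T hx)
  have hmass_zero : mass 0 ≤ ∑ x ∈ s, π x := sum_le_sum fun x hx =>
    mul_le_of_le_one_right (hπ0 x hx) (sub_le_self 1 (hitProb_nonneg hP.nonneg 0 x))
  have hescape : ∀ t, P c u * surv t u ≤ escape t := fun t =>
    single_le_sum (f := fun y => P c y * surv t y)
      (fun y hy => mul_nonneg (hP.nonneg c y) (hP.one_sub_hitProb_nonneg t hy)) hu
  calc π c * P c u * truncHitTime s P c T u = π c * ∑ t ∈ range T, P c u * surv t u := by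
        rw [truncHitTime, mul_sum, mul_sum]; simp only [surv, mul_assoc]
    _ ≤ π c * ∑ t ∈ range T, escape t := by
        gcongr with t
        · exact hπ0 c hc
        · exact hescape t
    _ ≤ ∑ x ∈ s, π x := by linarith

end IsStochasticOn

end FiniteChain

section Trajectories

variable {V Ω : Type*}

def pathEvent (S : ℕ → Ω → V) {n : ℕ} (w : Fin (n + 1) → V) : Set Ω :=
  {ω | ∀ k : Fin (n + 1), S k ω = w k}

lemma pathEvent_snoc (S : ℕ → Ω → V) {n : ℕ} (w : Fin (n + 1) → V) (y : V) :
    pathEvent S (Fin.snoc w y : Fin (n + 2) → V) = pathEvent S w ∩ {ω | S (n + 1) ω = y} := by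
  ext ω
  simp only [pathEvent, Set.mem_inter_iff, Set.mem_ofPred_eq, Fin.forall_fin_succ',
    Fin.snoc_castSucc, Fin.snoc_last, Fin.val_castSucc, Fin.val_last]

variable [MeasurableSpace Ω]

def IsMarkovChain (μ : Measure Ω) (S : ℕ → Ω → V) (K : V → V → ℝ) : Prop :=
  ∀ (n : ℕ) (w : Fin (n + 1) → V) (y : V),
    μ (pathEvent S w ∩ {ω | S (n + 1) ω = y})
      = μ (pathEvent S w) * ENNReal.ofReal (K (w (Fin.last n)) y)

lemma measure_pathEvent_le_of_last_mem (μ : Measure Ω) {S : ℕ → Ω → V} {B : Set V} {n : ℕ}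
    (t : ℕ) {w : Fin (n + 1) → V} (hw : w (Fin.last n) ∈ B) :
    μ (pathEvent S w) ≤ μ (pathEvent S w ∩ {ω | ∃ m ≤ t, S (n + m) ω ∈ B}) :=
  measure_mono fun ω hω => ⟨hω, 0, t.zero_le, by simpa using hω (Fin.last n) ▸ hw⟩

variable [MeasurableSpace V] {S : ℕ → Ω → V}

lemma measurableSet_exists_le_mem (hS : ∀ n, Measurable (S n)) {B : Set V} (hB : MeasurableSet B)
    (n t : ℕ) : MeasurableSet {ω | ∃ m ≤ t, S (n + m) ω ∈ B} := by
  simp only [Set.ofPred_exists]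
  exact MeasurableSet.iUnion fun m => (MeasurableSet.const (m ≤ t)).inter (hS (n + m) hB)

variable [MeasurableSingletonClass V]

lemma measurableSet_pathEvent (hS : ∀ n, Measurable (S n)) {n : ℕ} (w : Fin (n + 1) → V) :
    MeasurableSet (pathEvent S w) := by
  simp only [pathEvent, Set.ofPred_forall]
  exact MeasurableSet.iInter fun k => hS k (measurableSet_singleton (w k))

/-- Inside `D` the chain `S` moves with the kernel `P`, and `hitProb` ignores the paths that
leave `D`. -/
lemma IsMarkovChain.ofReal_hitProb_mul_le {μ : Measure Ω} {K : V → V → ℝ}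
    (hK : IsMarkovChain μ S K) (hS : ∀ n, Measurable (S n)) {s : Finset V} {P : V → V → ℝ}
    {B D : Set V} (hP : ∀ x y, 0 ≤ P x y) (hPK : ∀ x ∈ D, ∀ y, P x y = K x y)
    (hB : MeasurableSet B) (t n : ℕ) (w : Fin (n + 1) → V) :
    ENNReal.ofReal (hitProb s P B D t (w (Fin.last n))) * μ (pathEvent S w)
      ≤ μ (pathEvent S w ∩ {ω | ∃ m ≤ t, S (n + m) ω ∈ B}) := by
  induction t generalizing n with
  | zero =>
    by_cases hwB : w (Fin.last n) ∈ B
    · simpa [hitProb_of_mem hwB] using measure_pathEvent_le_of_last_mem μ 0 hwB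
    · simp [hitProb_zero_of_notMem hwB]
  | succ t ih =>
    set x := w (Fin.last n)
    by_cases hxB : x ∈ B
    · simpa [hitProb_of_mem hxB] using measure_pathEvent_le_of_last_mem μ (t + 1) hxB
    by_cases hxD : x ∉ D
    · simp [hitProb_succ_of_notMem_of_notMem hxB hxD]
    rw [not_not] at hxD
    set E := pathEvent S w
    set F : V → Set Ω := fun y =>
      E ∩ {ω | S (n + 1) ω = y} ∩ {ω | ∃ m ≤ t, S (n + 1 + m) ω ∈ B}
    have hF : ∀ y, ENNReal.ofReal (P x y * hitProb s P B D t y) * μ E ≤ μ (F y) := fun y => by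
      have := ih (n + 1) (Fin.snoc w y)
      rw [Fin.snoc_last, pathEvent_snoc, hK n w y] at this
      rw [ENNReal.ofReal_mul (hP x y), hPK x hxD y]
      calc _ = ENNReal.ofReal (hitProb s P B D t y) * (μ E * ENNReal.ofReal (K x y)) := by ring
        _ ≤ μ (F y) := this
    have hdisj : (s : Set V).PairwiseDisjoint F := fun y₁ _ y₂ _ hne =>
      Set.disjoint_left.2 fun ω h₁ h₂ => hne (h₁.1.2.symm.trans h₂.1.2)
    have hFsub : (⋃ y ∈ s, F y) ⊆ E ∩ {ω | ∃ m ≤ t + 1, S (n + m) ω ∈ B} := by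
      simp only [Set.iUnion_subset_iff]
      rintro y - ω ⟨⟨hω, -⟩, m, hm, hSm⟩
      exact ⟨hω, m + 1, by omega, by rwa [← add_assoc, add_right_comm]⟩
    calc ENNReal.ofReal (hitProb s P B D (t + 1) x) * μ E
        = ∑ y ∈ s, ENNReal.ofReal (P x y * hitProb s P B D t y) * μ E := by
          rw [hitProb_succ_of_notMem hxB hxD, ENNReal.ofReal_sum_of_nonneg
            fun y _ => mul_nonneg (hP x y) (hitProb_nonneg hP t y), sum_mul]
      _ ≤ ∑ y ∈ s, μ (F y) := sum_le_sum fun y _ => hF y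
      _ = μ (⋃ y ∈ s, F y) := (measure_biUnion_finset hdisj fun y _ =>
          (pathEvent_snoc S w y ▸ measurableSet_pathEvent hS _).inter
            (measurableSet_exists_le_mem hS hB _ t)).symm
      _ ≤ _ := measure_mono hFsub

lemma IsMarkovChain.ofReal_hitProb_le {μ : Measure Ω} [IsProbabilityMeasure μ] {K : V → V → ℝ}
    (hK : IsMarkovChain μ S K) (hS : ∀ n, Measurable (S n)) {s : Finset V} {P : V → V → ℝ}
    {B D : Set V} (hP : ∀ x y, 0 ≤ P x y) (hPK : ∀ x ∈ D, ∀ y, P x y = K x y)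
    (hB : MeasurableSet B) {a : V} (h0 : ∀ ω, S 0 ω = a) (t : ℕ) :
    ENNReal.ofReal (hitProb s P B D t a) ≤ μ {ω | ∃ m ≤ t, S m ω ∈ B} := by
  have hstart : pathEvent S (fun _ : Fin 1 => a) = Set.univ :=
    Set.eq_univ_of_forall fun ω k => by simpa [Fin.fin_one_eq_zero k] using h0 ω
  simpa [hstart] using hK.ofReal_hitProb_mul_le hS hP hPK hB t 0 (fun _ => a)

end Trajectories

namespace Cylinder

variable {W : Type*}

def slabInterior (z₀ : ℤ) (L : ℕ) : Set (ℤ × W) := {x | z₀ - L < x.1 ∧ x.1 < z₀ + L}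

lemma mem_slabInterior {z₀ : ℤ} {L : ℕ} {x : ℤ × W} :
    x ∈ slabInterior z₀ L ↔ z₀ - L < x.1 ∧ x.1 < z₀ + L := Iff.rfl

variable [Fintype W] (Γ : SimpleGraph W)

noncomputable def slab (z₀ : ℤ) (L : ℕ) : Finset (ℤ × W) := Icc (z₀ - L) (z₀ + L) ×ˢ univ

noncomputable def cylDeg (x : ℤ × W) : ℝ := Γ.degree x.2 + 2

noncomputable def cylKernel (x y : ℤ × W) : ℝ :=
  (if (cylGraph Γ).Adj x y then 1 else 0) / cylDeg Γ x

/-- Edge weights of the walk on `slab z₀ L` whose vertical steps out of the slab become loops. -/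
noncomputable def reflWeight (z₀ : ℤ) (L : ℕ) (x y : ℤ × W) : ℝ :=
  (if y.1 = x.1 ∧ Γ.Adj x.2 y.2 then 1 else 0)
    + (if y = (min (x.1 + 1) (z₀ + L), x.2) then 1 else 0)
    + (if y = (max (x.1 - 1) (z₀ - L), x.2) then 1 else 0)

noncomputable def reflKernel (z₀ : ℤ) (L : ℕ) (x y : ℤ × W) : ℝ :=
  reflWeight Γ z₀ L x y / cylDeg Γ x

variable {Γ} {z₀ : ℤ} {L : ℕ} {x y : ℤ × W}

lemma mem_slab : x ∈ slab z₀ L ↔ z₀ - L ≤ x.1 ∧ x.1 ≤ z₀ + L := by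
  simp [slab]

lemma cylDeg_pos (x : ℤ × W) : 0 < cylDeg Γ x := by
  unfold cylDeg; positivity

lemma sum_reflWeight_mul (hx : x ∈ slab z₀ L) (f : ℤ × W → ℝ) :
    ∑ y ∈ slab z₀ L, reflWeight Γ z₀ L x y * f y
      = ∑ γ ∈ Γ.neighborFinset x.2, f (x.1, γ) + f (min (x.1 + 1) (z₀ + L), x.2)
        + f (max (x.1 - 1) (z₀ - L), x.2) := by
  have hx' := mem_slab.1 hx
  have hup : (min (x.1 + 1) (z₀ + L), x.2) ∈ slab z₀ L := mem_slab.2 ⟨by omega, by omega⟩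
  have hdown : (max (x.1 - 1) (z₀ - L), x.2) ∈ slab z₀ L := mem_slab.2 ⟨by omega, by omega⟩
  simp only [reflWeight, add_mul, ite_mul, one_mul, zero_mul, sum_add_distrib, sum_ite_eq',
    hup, hdown, if_true]
  congr 2
  rw [slab, sum_product, sum_eq_single_of_mem x.1 (mem_Icc.2 hx')]
  · simp [SimpleGraph.neighborFinset_eq_filter, sum_filter]
  · intro z _ hz
    simp [hz]

lemma reflWeight_comm (hx : x ∈ slab z₀ L) (hy : y ∈ slab z₀ L) :
    reflWeight Γ z₀ L x y = reflWeight Γ z₀ L y x := by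
  unfold reflWeight
  rw [add_assoc, add_assoc]
  congr 1
  · simp only [eq_comm (a := y.1), Γ.adj_comm x.2]
  by_cases hxy : x = y
  · rw [hxy]
  by_cases h2 : x.2 = y.2
  · have h1 : x.1 ≠ y.1 := fun h => hxy (Prod.ext h h2)
    rw [mem_slab] at hx hy
    have e1 : y.1 = min (x.1 + 1) (z₀ + L) ↔ x.1 = max (y.1 - 1) (z₀ - L) := by omega
    have e2 : y.1 = max (x.1 - 1) (z₀ - L) ↔ x.1 = min (y.1 + 1) (z₀ + L) := by omega
    simp only [Prod.ext_iff, h2, and_true, e1, e2]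
    ring
  · simp [Prod.ext_iff, h2, Ne.symm h2]

lemma cylDeg_mul_reflKernel (x y : ℤ × W) :
    cylDeg Γ x * reflKernel Γ z₀ L x y = reflWeight Γ z₀ L x y :=
  mul_div_cancel₀ _ (cylDeg_pos x).ne'

lemma isStochasticOn_reflKernel (z₀ : ℤ) (L : ℕ) :
    IsStochasticOn (slab z₀ L) (reflKernel Γ z₀ L) where
  nonneg x y := by unfold reflKernel reflWeight; have := cylDeg_pos (Γ := Γ) x; positivity
  sum_eq_one x hx := by
    have h := sum_reflWeight_mul (Γ := Γ) hx fun _ => 1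
    simp only [mul_one, sum_const, SimpleGraph.card_neighborFinset_eq_degree, nsmul_eq_mul] at h
    simp only [reflKernel]
    rw [← sum_div, h, div_eq_one_iff_eq (cylDeg_pos x).ne', cylDeg]
    ring

lemma sum_cylDeg_mul_reflKernel (hy : y ∈ slab z₀ L) :
    ∑ x ∈ slab z₀ L, cylDeg Γ x * reflKernel Γ z₀ L x y = cylDeg Γ y :=
  (isStochasticOn_reflKernel z₀ L).sum_mul_eq_of_reversible (fun x hx y hy => by
    rw [cylDeg_mul_reflKernel, cylDeg_mul_reflKernel, reflWeight_comm hx hy]) hy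

lemma cylDeg_mul_reflKernel_of_adj {c u : ℤ × W} (h1 : u.1 = c.1) (h2 : Γ.Adj c.2 u.2) :
    cylDeg Γ c * reflKernel Γ z₀ L c u = 1 := by
  have hne : u.2 ≠ c.2 := h2.ne.symm
  simp [cylDeg_mul_reflKernel, reflWeight, h1, h2, Prod.ext_iff, hne]

lemma reflKernel_eq_cylKernel (hx : x ∈ slabInterior z₀ L) (y : ℤ × W) :
    reflKernel Γ z₀ L x y = cylKernel Γ x y := by
  rw [mem_slabInterior] at hx
  rw [reflKernel, cylKernel, reflWeight, min_eq_left (by omega), max_eq_left (by omega)]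
  congr 1
  by_cases hA : y.1 = x.1 ∧ Γ.Adj x.2 y.2
  · have hadj : (cylGraph Γ).Adj x y := Or.inl ⟨hA.1.symm, hA.2⟩
    simp [hA, hadj, Prod.ext_iff, hA.2.ne.symm]
  by_cases h2 : y.2 = x.2
  · have hadj : (cylGraph Γ).Adj x y ↔ y.1 = x.1 + 1 ∨ y.1 = x.1 - 1 := by
      simp only [cylGraph, h2, Γ.loopless.irrefl, and_false, true_and, false_or]
      omega
    rw [if_neg hA, zero_add]
    simp only [hadj, Prod.ext_iff, h2, and_true]
    split_ifs <;> norm_num <;> omega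
  · have hadj : ¬(cylGraph Γ).Adj x y := by
      rintro (⟨h, h'⟩ | ⟨h, -⟩)
      exacts [hA ⟨h.symm, h'⟩, h2 h.symm]
    simp [hA, hadj, Prod.ext_iff, h2]

lemma sum_reflKernel_mul_sq_le (hx : x ∈ slabInterior z₀ L) :
    ∑ y ∈ slab z₀ L, reflKernel Γ z₀ L x y * ((y.1 : ℝ) - z₀) ^ 2 ≤ ((x.1 : ℝ) - z₀) ^ 2 + 1 := by
  rw [mem_slabInterior] at hx
  have hsum := sum_reflWeight_mul (Γ := Γ) (mem_slab.2 ⟨hx.1.le, hx.2.le⟩)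
    fun y => ((y.1 : ℝ) - z₀) ^ 2
  simp only [min_eq_left (show x.1 + 1 ≤ z₀ + L by omega),
    max_eq_left (show z₀ - L ≤ x.1 - 1 by omega), sum_const,
    SimpleGraph.card_neighborFinset_eq_degree, nsmul_eq_mul, Int.cast_add, Int.cast_sub,
    Int.cast_one] at hsum
  simp only [reflKernel, div_mul_eq_mul_div, ← sum_div, hsum]
  rw [div_le_iff₀ (cylDeg_pos x), cylDeg]
  nlinarith [(Γ.degree x.2).cast_nonneg (α := ℝ)]

lemma sum_cylDeg_slab_le (z₀ : ℤ) (L : ℕ) :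
    ∑ x ∈ slab z₀ L, cylDeg Γ x ≤ (2 * L + 1) * (Fintype.card W * (Fintype.card W + 1)) := by
  have hdeg : ∀ γ : W, (Γ.degree γ : ℝ) + 2 ≤ Fintype.card W + 1 := fun γ => by
    have := Γ.degree_lt_card_verts γ
    have : (Γ.degree γ : ℝ) + 1 ≤ Fintype.card W := by exact_mod_cast this
    linarith
  have hcard : ((Icc (z₀ - L) (z₀ + L)).card : ℝ) = 2 * L + 1 := by
    rw [Int.card_Icc, show z₀ + L + 1 - (z₀ - L) = ((2 * L + 1 : ℕ) : ℤ) by push_cast; ring,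
      Int.toNat_natCast]
    push_cast; ring
  calc ∑ x ∈ slab z₀ L, cylDeg Γ x
        = ∑ _z ∈ Icc (z₀ - L) (z₀ + L), ∑ γ : W, ((Γ.degree γ : ℝ) + 2) := by
        rw [slab, sum_product]; rfl
    _ ≤ ∑ _z ∈ Icc (z₀ - L) (z₀ + L), ∑ _γ : W, ((Fintype.card W : ℝ) + 1) := by
        exact sum_le_sum fun _ _ => sum_le_sum fun γ _ => hdeg γ
    _ = _ := by simp only [sum_const, card_univ, nsmul_eq_mul, hcard]

lemma truncHitTime_le_length_mul {α β : W} (p : Γ.Walk α β) (T : ℕ) :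
    truncHitTime (slab z₀ L) (reflKernel Γ z₀ L) (z₀, β) T (z₀, α)
      ≤ p.length * ∑ x ∈ slab z₀ L, cylDeg Γ x := by
  have hmem : ∀ γ : W, ((z₀, γ) : ℤ × W) ∈ slab z₀ L := fun γ => mem_slab.2 ⟨by omega, by omega⟩
  have hP := isStochasticOn_reflKernel (Γ := Γ) z₀ L
  induction p with
  | nil => simp [truncHitTime_self]
  | @cons α γ β hαγ p ih =>
    have hstep := hP.mul_truncHitTime_le (fun x _ => (cylDeg_pos x).le)
      (fun y hy => sum_cylDeg_mul_reflKernel hy) (hmem γ) (hmem α) T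
    rw [cylDeg_mul_reflKernel_of_adj (c := (z₀, γ)) (u := (z₀, α)) rfl hαγ.symm, one_mul]
      at hstep
    calc _ ≤ truncHitTime (slab z₀ L) (reflKernel Γ z₀ L) (z₀, γ) T (z₀, α)
          + truncHitTime (slab z₀ L) (reflKernel Γ z₀ L) (z₀, β) T (z₀, γ) :=
          hP.truncHitTime_le_add (hmem α) (hmem γ) T
      _ ≤ _ := by rw [SimpleGraph.Walk.length_cons]; push_cast; linarith

lemma mul_one_sub_hitProb_le (hΓ : Γ.Connected) (z₀ : ℤ) (L : ℕ) (α β : W) (T : ℕ) :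
    T * (1 - hitProb (slab z₀ L) (reflKernel Γ z₀ L) {(z₀, β)} Set.univ T (z₀, α))
      ≤ (Fintype.card W - 1) * ((2 * L + 1) * (Fintype.card W * (Fintype.card W + 1))) := by
  obtain ⟨p, hp⟩ := hΓ.exists_isPath α β
  have hlen : (p.length : ℝ) ≤ Fintype.card W - 1 := by
    have := hp.length_lt
    rw [le_sub_iff_add_le]; exact_mod_cast this
  calc _ ≤ truncHitTime (slab z₀ L) (reflKernel Γ z₀ L) (z₀, β) T (z₀, α) :=
        mul_one_sub_hitProb_le_truncHitTime (isStochasticOn_reflKernel z₀ L).nonneg _ T _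
    _ ≤ p.length * ∑ x ∈ slab z₀ L, cylDeg Γ x := truncHitTime_le_length_mul p T
    _ ≤ _ := mul_le_mul hlen (sum_cylDeg_slab_le z₀ L)
        (sum_nonneg fun x _ => (cylDeg_pos x).le) (by linarith [p.length.cast_nonneg (α := ℝ)])

lemma sq_mul_hitProb_compl_slabInterior_le (z₀ : ℤ) (L : ℕ) (α : W) (T : ℕ) :
    (L : ℝ) ^ 2 * hitProb (slab z₀ L) (reflKernel Γ z₀ L) (slabInterior z₀ L)ᶜ Set.univ T (z₀, α)
      ≤ T := by
  have h := (isStochasticOn_reflKernel (Γ := Γ) z₀ L).mul_hitProb_le_of_drift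
    (φ := fun y => ((y.1 : ℝ) - z₀) ^ 2) (K := (L : ℝ) ^ 2)
    (B := (slabInterior z₀ L)ᶜ) (fun _ _ => sq_nonneg _) (fun x hx hxB => ?_)
    (fun x _ hxB => sum_reflKernel_mul_sq_le (not_not.1 hxB)) T
    (mem_slab.2 ⟨by omega, by omega⟩ : ((z₀, α) : ℤ × W) ∈ slab z₀ L)
  · simpa using h
  · rw [mem_slab] at hx
    rw [Set.mem_compl_iff, mem_slabInterior] at hxB
    have : x.1 - z₀ = L ∨ x.1 - z₀ = -L := by omega
    rcases this with h | h <;>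
      simp [show (x.1 : ℝ) - z₀ = ((x.1 - z₀ : ℤ) : ℝ) by push_cast; ring, h]

/-- With `L = 256 N³` and `T = 4⁶ N⁶`, the target is missed with probability at most `1/4`, and a
wall is reached with probability at most `T / L² = 1/16`. -/
lemma half_le_hitProb (hΓ : Γ.Connected) (z₀ : ℤ) (α β : W) :
    1 / 2 ≤ hitProb (slab z₀ (256 * Fintype.card W ^ 3))
      (reflKernel Γ z₀ (256 * Fintype.card W ^ 3)) {(z₀, β)}
      (slabInterior z₀ (256 * Fintype.card W ^ 3)) (4 ^ 6 * Fintype.card W ^ 6) (z₀, α) := by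
  set N := Fintype.card W
  set L := 256 * N ^ 3
  set T := 4 ^ 6 * N ^ 6
  have hN0 : 0 < N := Fintype.card_pos_iff.2 ⟨α⟩
  have hN : (1 : ℝ) ≤ N := by exact_mod_cast hN0
  have hT : (0 : ℝ) < T := by simp only [T]; positivity
  have hLT : (L : ℝ) ^ 2 = 16 * T := by simp only [L, T]; push_cast; ring
  have hbound : ((N : ℝ) - 1) * ((2 * L + 1) * (N * (N + 1))) ≤ T * (1 / 4) := by
    have hcube : (1 : ℝ) ≤ N ^ 3 := one_le_pow₀ hN
    simp only [L, T]; push_cast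
    nlinarith [mul_nonneg (sub_nonneg.2 hN) (sub_nonneg.2 hcube)]
  have hmiss := le_of_mul_le_mul_left ((mul_one_sub_hitProb_le hΓ z₀ L α β T).trans hbound) hT
  have hwall := sq_mul_hitProb_compl_slabInterior_le (Γ := Γ) z₀ L α T
  rw [hLT, mul_comm 16, mul_assoc] at hwall
  have hwall' := le_of_mul_le_mul_left (hwall.trans (mul_one _).ge) hT
  have hunion := (isStochasticOn_reflKernel (Γ := Γ) z₀ L).hitProb_sub_hitProb_compl_le
    (B := {(z₀, β)}) (D := slabInterior z₀ L) T
    (mem_slab.2 ⟨by omega, by omega⟩ : ((z₀, α) : ℤ × W) ∈ slab z₀ L)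
  linarith

end Cylinder

open Cylinder

theorem stmt3_general {W : Type*} [Fintype W] [MeasurableSpace W]
    [MeasurableSingletonClass W]
    (Γ : SimpleGraph W) (hΓ : Γ.Connected)
    {Ω : Type*} [MeasurableSpace Ω] (μ : Measure Ω) [IsProbabilityMeasure μ]
    (S : ℕ → Ω → ℤ × W) (hmeas : ∀ n, Measurable (S n))
    (a b : ℤ × W) (hab : a.1 = b.1)
    (h0 : ∀ ω, S 0 ω = a)
    (hwalk : ∀ (n : ℕ) (w : Fin (n+1) → ℤ × W) (y : ℤ × W),
      μ {ω | (∀ k : Fin (n+1), S k ω = w k) ∧ S (n+1) ω = y}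
        = μ {ω | ∀ k : Fin (n+1), S k ω = w k}
          * ENNReal.ofReal
            ((if (cylGraph Γ).Adj (w (Fin.last n)) y then 1 else 0)
              / (Γ.degree (w (Fin.last n)).2 + 2))) :
    (1 : ℝ≥0∞)/2 ≤ μ {ω | ∃ n ≤ 4^6 * (Fintype.card W)^6, S n ω = b} := by
  have hK : IsMarkovChain μ S (cylKernel Γ) := hwalk
  obtain ⟨z₀, α⟩ := a
  obtain ⟨z₁, β⟩ := b
  obtain rfl : z₀ = z₁ := hab
  calc (1 : ℝ≥0∞) / 2 = ENNReal.ofReal (1 / 2) := by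
        rw [ENNReal.ofReal_div_of_pos two_pos]; simp
    _ ≤ _ := ENNReal.ofReal_le_ofReal (half_le_hitProb hΓ z₀ α β)
    _ ≤ _ := hK.ofReal_hitProb_le hmeas (isStochasticOn_reflKernel z₀ _).nonneg
        (fun x hx y => reflKernel_eq_cylKernel hx y) (measurableSet_singleton _) h0 _

/-- **Hitting a vertex on the same level.** For the simple random walk on `ℤ × Γ` (with `Γ` a
finite connected graph) started at `a`, and any `b` with the same `ℤ`-coordinate as `a`,
`P_a(H_b ≤ 4⁶|Γ|⁶) ≥ 1/2`. -/
theorem stmt3 {W : Type*} [Fintype W] [Nonempty W] [MeasurableSpace W]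
    [MeasurableSingletonClass W]
    (Γ : SimpleGraph W) (hΓ : Γ.Connected)
    {Ω : Type*} [MeasurableSpace Ω] (μ : Measure Ω) [IsProbabilityMeasure μ]
    (S : ℕ → Ω → ℤ × W) (hmeas : ∀ n, Measurable (S n))
    (a b : ℤ × W) (hab : a.1 = b.1)
    (h0 : ∀ ω, S 0 ω = a)
    (hwalk : ∀ (n : ℕ) (w : Fin (n+1) → ℤ × W) (y : ℤ × W),
      μ {ω | (∀ k : Fin (n+1), S k ω = w k) ∧ S (n+1) ω = y}
        = μ {ω | ∀ k : Fin (n+1), S k ω = w k}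
          * ENNReal.ofReal
            ((if (cylGraph Γ).Adj (w (Fin.last n)) y then 1 else 0)
              / (Γ.degree (w (Fin.last n)).2 + 2))) :
    (1 : ℝ≥0∞)/2 ≤ μ {ω | ∃ n ≤ 4^6 * (Fintype.card W)^6, S n ω = b} :=
  stmt3_general Γ hΓ μ S hmeas a b hab h0 hwalk
end

section
/- Let (X_n) be a process on ℤ≥0 started at a point in (0, ∞), and suppose there is a constant q ≤ 2^{−10} such that almost surely, for every sufficiently large x, on the event that the process reaches level x, the conditional probability of reaching level 2x before returning to level 0 is at most q. Then almost surely the process returns to level 0 after reaching any positive level; i.e., sup of levels reached before returning to 0 is a.s. finite, being stochastically bounded by 2 raised to a geometric random variable. -/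
/-! A path that is unbounded before it hits `0` reaches every dyadic level `2ᵏ x₀` before `0`,
and iterating the gambler's ruin estimate bounds the probability of that by `qᵏ`. Since `q < 1`,
such paths form a null event. -/

open MeasureTheory
open scoped ENNReal

theorem le_pow_mul_of_le_mul {M : Type*} [Monoid M] [Preorder M] [MulLeftMono M]
    {a : ℕ → M} {q : M} (h : ∀ k, a (k + 1) ≤ q * a k) (k : ℕ) : a k ≤ q ^ k * a 0 := by
  induction k with
  | zero => simp
  | succ k ih =>
    calc a (k + 1) ≤ q * a k := h k
      _ ≤ q * (q ^ k * a 0) := by gcongr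
      _ = q ^ (k + 1) * a 0 := by rw [pow_succ', mul_assoc]

theorem ENNReal.eq_zero_of_forall_le_pow {x q : ℝ≥0∞} (hq : q < 1) (h : ∀ k : ℕ, x ≤ q ^ k) :
    x = 0 :=
  nonpos_iff_eq_zero.1 <|
    ge_of_tendsto' (ENNReal.tendsto_pow_atTop_nhds_zero_of_lt_one hq) h

section ReachBeforeZero

variable {Ω : Type*} (X : ℕ → Ω → ℕ)

def reachBeforeZero (x : ℕ) : Set Ω := {ω | ∃ n, x ≤ X n ω ∧ ∀ m ≤ n, X m ω ≠ 0}

theorem compl_setOf_bounded_subset_reachBeforeZero (x : ℕ) :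
    {ω | ∃ M : ℕ, ∀ n, (∀ m ≤ n, X m ω ≠ 0) → X n ω ≤ M}ᶜ ⊆ reachBeforeZero X x := by
  intro ω hω
  simp only [Set.mem_compl_iff, Set.mem_ofPred_eq, not_exists, not_forall, not_le] at hω
  obtain ⟨n, hn, hgt⟩ := hω x
  exact ⟨n, hgt.le, hn⟩

variable [MeasurableSpace Ω] {μ : Measure Ω} {q : ℝ≥0∞} {x₀ : ℕ}

theorem measure_reachBeforeZero_two_pow_mul_le
    (hgr : ∀ x, x₀ ≤ x → μ (reachBeforeZero X (2 * x)) ≤ q * μ (reachBeforeZero X x))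
    (k : ℕ) : μ (reachBeforeZero X (2 ^ k * x₀)) ≤ q ^ k * μ (reachBeforeZero X x₀) := by
  have hstep (k : ℕ) : μ (reachBeforeZero X (2 ^ (k + 1) * x₀))
      ≤ q * μ (reachBeforeZero X (2 ^ k * x₀)) := by
    simpa only [pow_succ', mul_assoc] using hgr _ (Nat.le_mul_of_pos_left x₀ (by positivity))
  simpa only [pow_zero, one_mul] using
    le_pow_mul_of_le_mul (a := fun k ↦ μ (reachBeforeZero X (2 ^ k * x₀))) hstep k

end ReachBeforeZero

theorem stmt17_general {Ω : Type*} [MeasurableSpace Ω] (μ : Measure Ω) [IsProbabilityMeasure μ]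
    (X : ℕ → Ω → ℕ)
    (q : ℝ≥0∞) (hq : q ≤ (2:ℝ≥0∞)⁻¹ ^ 10)
    (x₀ : ℕ)
    (hgr : ∀ x, x₀ ≤ x →
      μ {ω | ∃ n, 2*x ≤ X n ω ∧ ∀ m ≤ n, X m ω ≠ 0}
        ≤ q * μ {ω | ∃ n, x ≤ X n ω ∧ ∀ m ≤ n, X m ω ≠ 0}) :
    μ {ω | ∃ M : ℕ, ∀ n, (∀ m ≤ n, X m ω ≠ 0) → X n ω ≤ M} = 1 := by
  have hq_lt_one : q < 1 :=
    hq.trans_lt (pow_lt_one₀ zero_le ENNReal.one_half_lt_one (by norm_num))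
  have hunbounded_null : μ {ω | ∃ M : ℕ, ∀ n, (∀ m ≤ n, X m ω ≠ 0) → X n ω ≤ M}ᶜ = 0 := by
    refine ENNReal.eq_zero_of_forall_le_pow hq_lt_one fun k ↦ ?_
    calc _ ≤ μ (reachBeforeZero X (2 ^ k * x₀)) :=
          measure_mono (compl_setOf_bounded_subset_reachBeforeZero X _)
      _ ≤ q ^ k * μ (reachBeforeZero X x₀) := measure_reachBeforeZero_two_pow_mul_le X hgr k
      _ ≤ q ^ k := mul_le_of_le_one_right' prob_le_one
  exact (measure_congr (ae_eq_univ.2 hunbounded_null)).trans measure_univ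

/-- **Recurrence from a uniform gambler's ruin estimate.** Let `(X n)` be a process on the
nonnegative integers started at a positive point. If there is `q ≤ 2⁻¹⁰` such that for every
sufficiently large `x`, the probability of reaching level `2x` before returning to `0` is at
most `q` times the probability of reaching level `x` before returning to `0`, then almost
surely the supremum of the levels reached before returning to `0` is finite. -/
theorem stmt17 {Ω : Type*} [MeasurableSpace Ω] (μ : Measure Ω) [IsProbabilityMeasure μ]
    (X : ℕ → Ω → ℕ) (hmeas : ∀ n, Measurable (X n))
    (h0 : ∀ ω, 0 < X 0 ω)
    (q : ℝ≥0∞) (hq : q ≤ (2:ℝ≥0∞)⁻¹ ^ 10)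
    (x₀ : ℕ)
    (hgr : ∀ x, x₀ ≤ x →
      μ {ω | ∃ n, 2*x ≤ X n ω ∧ ∀ m ≤ n, X m ω ≠ 0}
        ≤ q * μ {ω | ∃ n, x ≤ X n ω ∧ ∀ m ≤ n, X m ω ≠ 0}) :
    μ {ω | ∃ M : ℕ, ∀ n, (∀ m ≤ n, X m ω ≠ 0) → X n ω ≤ M} = 1 :=
  stmt17_general μ X q hq x₀ hgr
end
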